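/- arXiv:1711.08990 — 5 statements merged into one kernel-verified Lean document; each statement's English description precedes it below -/
import Mathlib

section
/- In a Lorentzian pre-length space, for every x ∈ X the chronological future I⁺(x) = {y : x ≪ y} and the chronological past I⁻(x) = {y : y ≪ x} are open subsets of X with respect to the metric topology. -/
open scoped ENNReal NNReal

/-- A Lorentzian pre-length space: a metric space `X` with a preorder `causal` (≤),
a transitive relation `chron` (≪) contained in `causal`, and a lower semicontinuous
time separation function `tau : X × X → [0,∞]` satisfying the reverse triangle
inequality on causal chains, `tau x y = 0` if `¬ causal x y`, and `tau x y > 0 ↔ chron x y`. -/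
structure LorentzianPreLengthSpace (X : Type*) [MetricSpace X] where
  causal : X → X → Prop
  chron : X → X → Prop
  tau : X → X → ℝ≥0∞
  causal_refl : ∀ x, causal x x
  causal_trans : ∀ {x y z}, causal x y → causal y z → causal x z
  chron_trans : ∀ {x y z}, chron x y → chron y z → chron x z
  chron_imp_causal : ∀ {x y}, chron x y → causal x y
  tau_lsc : LowerSemicontinuous (fun p : X × X => tau p.1 p.2)
  rev_triangle : ∀ {x y z}, causal x y → causal y z → tau x y + tau y z ≤ tau x z
  tau_eq_zero_of_not_causal : ∀ {x y}, ¬ causal x y → tau x y = 0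
  tau_pos_iff : ∀ {x y}, 0 < tau x y ↔ chron x y

variable {X : Type*} [MetricSpace X]

/-- A future-directed causal curve on `[a,b]`: non-constant, Lipschitz on `[a,b]`,
with causally related values. -/
def IsCausalCurve (L : LorentzianPreLengthSpace X) (γ : ℝ → X) (a b : ℝ) : Prop :=
  a < b ∧ (∃ s ∈ Set.Icc a b, ∃ t ∈ Set.Icc a b, γ s ≠ γ t) ∧
  (∃ K : ℝ≥0, LipschitzOnWith K γ (Set.Icc a b)) ∧
  ∀ s t, a ≤ s → s < t → t ≤ b → L.causal (γ s) (γ t)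

/-- A future-directed timelike curve on `[a,b]`. -/
def IsTimelikeCurve (L : LorentzianPreLengthSpace X) (γ : ℝ → X) (a b : ℝ) : Prop :=
  a < b ∧ (∃ s ∈ Set.Icc a b, ∃ t ∈ Set.Icc a b, γ s ≠ γ t) ∧
  (∃ K : ℝ≥0, LipschitzOnWith K γ (Set.Icc a b)) ∧
  ∀ s t, a ≤ s → s < t → t ≤ b → L.chron (γ s) (γ t)

/-- The τ-length of a curve on `[a,b]`: the infimum over all partitions
`a = t₀ < t₁ < ... < t_N = b` of `Σᵢ τ(γ(tᵢ), γ(t_{i+1}))`. -/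
noncomputable def tauLength (L : LorentzianPreLengthSpace X) (γ : ℝ → X) (a b : ℝ) : ℝ≥0∞ :=
  ⨅ (N : ℕ) (t : Fin (N + 1) → ℝ) (_ : StrictMono t) (_ : t 0 = a)
    (_ : t (Fin.last N) = b),
    ∑ i : Fin N, L.tau (γ (t i.castSucc)) (γ (t i.succ))

namespace LorentzianPreLengthSpace

variable (L : LorentzianPreLengthSpace X)

theorem lowerSemicontinuous_tau_right (x : X) : LowerSemicontinuous (L.tau x) :=
  LowerSemicontinuous.comp (f := fun p : X × X => L.tau p.1 p.2) L.tau_lsc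
    (Continuous.prodMk_right x)

theorem lowerSemicontinuous_tau_left (x : X) : LowerSemicontinuous (fun y => L.tau y x) :=
  LowerSemicontinuous.comp (f := fun p : X × X => L.tau p.1 p.2) L.tau_lsc
    (Continuous.prodMk_left x)

theorem isOpen_chron_future (x : X) : IsOpen {y | L.chron x y} := by
  rw [show {y | L.chron x y} = L.tau x ⁻¹' Set.Ioi 0 from Set.ext fun _ => L.tau_pos_iff.symm]
  exact (L.lowerSemicontinuous_tau_right x).isOpen_preimage 0

theorem isOpen_chron_past (x : X) : IsOpen {y | L.chron y x} := by
  rw [show {y | L.chron y x} = (L.tau · x) ⁻¹' Set.Ioi 0 from Set.ext fun _ => L.tau_pos_iff.symm]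
  exact (L.lowerSemicontinuous_tau_left x).isOpen_preimage 0

end LorentzianPreLengthSpace

/-- `I⁺(x)` and `I⁻(x)` are open. -/
theorem chronological_future_past_isOpen (L : LorentzianPreLengthSpace X) (x : X) :
    IsOpen {y : X | L.chron x y} ∧ IsOpen {y : X | L.chron y x} :=
  ⟨L.isOpen_chron_future x, L.isOpen_chron_past x⟩
end

section
/- In a Lorentzian pre-length space, the relation ≪ is an open subset of X × X (with the product metric topology). -/
open scoped ENNReal NNReal

variable {X : Type*} [MetricSpace X]

/-- The relation `≪` is open in `X × X`. -/
theorem chron_isOpen (L : LorentzianPreLengthSpace X) :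
    IsOpen {p : X × X | L.chron p.1 p.2} := by
  have h : {p : X × X | L.chron p.1 p.2} = (fun p : X × X => L.tau p.1 p.2) ⁻¹' Set.Ioi 0 := by
    ext p; exact L.tau_pos_iff.symm
  rw [h]
  exact L.tau_lsc.isOpen_preimage 0
end

section
/- A causally path connected Lorentzian pre-length space is interpolative: for all x, y with x ≪ y there exists z with x ≪ z ≪ y and x ≠ z ≠ y. -/
open scoped ENNReal NNReal

variable {X : Type*} [MetricSpace X]

/-- Causal path connectedness: chronologically related points are connected by
timelike curves, and causally related distinct points by causal curves. -/
def CausallyPathConnected (L : LorentzianPreLengthSpace X) : Prop :=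
  (∀ x y, L.chron x y → ∃ γ : ℝ → X, ∃ a b : ℝ,
      IsTimelikeCurve L γ a b ∧ γ a = x ∧ γ b = y) ∧
  (∀ x y, L.causal x y → x ≠ y → ∃ γ : ℝ → X, ∃ a b : ℝ,
      IsCausalCurve L γ a b ∧ γ a = x ∧ γ b = y)


/-- A causally path connected Lorentzian pre-length space is interpolative. -/
theorem interpolative_of_causallyPathConnected (L : LorentzianPreLengthSpace X)
    (h : CausallyPathConnected L) :
    ∀ x y, L.chron x y → ∃ z, L.chron x z ∧ L.chron z y ∧ x ≠ z ∧ z ≠ y := by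
  intro x y hxy
  obtain ⟨γ, a, b, ⟨hab, hnc, ⟨K, hlip⟩, hchr⟩, ha, hb⟩ := h.1 x y hxy
  -- helper: any interior point works if it differs from x and y
  have key : ∀ c ∈ Set.Icc a b, γ c ≠ x → γ c ≠ y →
      ∃ z, L.chron x z ∧ L.chron z y ∧ x ≠ z ∧ z ≠ y := by
    rintro c ⟨hac, hcb⟩ hne1 hne2
    have hac' : a < c := lt_of_le_of_ne hac (by rintro rfl; exact hne1 ha)
    have hcb' : c < b := lt_of_le_of_ne hcb (by rintro rfl; exact hne2 hb)
    refine ⟨γ c, ?_, ?_, fun hh => hne1 hh.symm, hne2⟩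
    · have := hchr a c le_rfl hac' hcb
      rwa [ha] at this
    · have := hchr c b hac hcb' le_rfl
      rwa [hb] at this
  by_cases hxyeq : x = y
  · -- x = y : use non-constancy
    obtain ⟨s, hs, t, ht, hst⟩ := hnc
    rcases eq_or_ne (γ s) x with h1 | h1
    · refine key t ht ?_ ?_
      · rw [← h1]; exact fun hh => hst hh.symm
      · rw [← hxyeq, ← h1]; exact fun hh => hst hh.symm
    · exact key s hs h1 (hxyeq ▸ h1)
  · -- x ≠ y : intermediate value theorem on dist (γ ·) x
    have hcont : ContinuousOn (fun t => dist (γ t) x) (Set.Icc a b) :=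
      (Continuous.dist continuous_id continuous_const).comp_continuousOn hlip.continuousOn
    have hdpos : 0 < dist y x := dist_pos.mpr (Ne.symm hxyeq)
    have hmem : dist y x / 2 ∈ Set.Icc ((fun t => dist (γ t) x) a)
        ((fun t => dist (γ t) x) b) := by
      simp only [ha, hb, dist_self]
      constructor
      · positivity
      · linarith
    obtain ⟨c, hc, hcd⟩ := intermediate_value_Icc hab.le hcont hmem
    simp only [] at hcd
    refine key c hc ?_ ?_
    · intro hh
      rw [hh, dist_self] at hcd
      linarith
    · intro hh
      rw [hh] at hcd
      linarith
end

section
/- Let (X,d,≪,≤,τ) be a locally causally closed Lorentzian pre-length space and let (γₙ) be a sequence of future-directed causal curves γₙ : [a,b] → X converging pointwise to a non-constant Lipschitz curve γ : [a,b] → X. Then γ is a future-directed causal curve. -/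
open scoped ENNReal NNReal

variable {X : Type*} [MetricSpace X]

/-- Local causal closedness: every point has a neighborhood `U` such that `≤` is
closed in `closure U × closure U`. -/
def LocallyCausallyClosed (L : LorentzianPreLengthSpace X) : Prop :=
  ∀ x : X, ∃ U ∈ nhds x, ∀ (p q : ℕ → X) (p' q' : X),
    (∀ n, p n ∈ U) → (∀ n, q n ∈ U) → (∀ n, L.causal (p n) (q n)) →
    Filter.Tendsto p Filter.atTop (nhds p') → p' ∈ closure U →
    Filter.Tendsto q Filter.atTop (nhds q') → q' ∈ closure U →
    L.causal p' q'

/-- The pointwise limit of causal curves is causal. -/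
theorem limit_of_causal_curves (L : LorentzianPreLengthSpace X)
    (hcc : LocallyCausallyClosed L)
    (γn : ℕ → ℝ → X) (γ : ℝ → X) {a b : ℝ}
    (hn : ∀ n, IsCausalCurve L (γn n) a b)
    (hconv : ∀ t ∈ Set.Icc a b, Filter.Tendsto (fun n => γn n t) Filter.atTop (nhds (γ t)))
    (hlip : ∃ K : ℝ≥0, LipschitzOnWith K γ (Set.Icc a b))
    (hnonconst : ∃ s ∈ Set.Icc a b, ∃ t ∈ Set.Icc a b, γ s ≠ γ t) :
    IsCausalCurve L γ a b := by
  have hab : a < b := (hn 0).1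
  refine ⟨hab, hnonconst, hlip, ?_⟩
  -- For each point of the curve, choose a causally closed neighborhood.
  obtain ⟨K, hK⟩ := hlip
  have hcont : ContinuousOn γ (Set.Icc a b) := hK.continuousOn
  -- choice of U and radius ε for each u ∈ [a,b]
  have key : ∀ u : Set.Icc a b, ∃ ε > (0:ℝ), ∃ U : Set X,
      (∀ (p q : ℕ → X) (p' q' : X),
        (∀ n, p n ∈ U) → (∀ n, q n ∈ U) → (∀ n, L.causal (p n) (q n)) →
        Filter.Tendsto p Filter.atTop (nhds p') → p' ∈ closure U →
        Filter.Tendsto q Filter.atTop (nhds q') → q' ∈ closure U →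
        L.causal p' q') ∧
      (∀ w ∈ Set.Icc a b, dist w (u:ℝ) < ε → γ w ∈ interior U) := by
    intro ⟨u, hu⟩
    obtain ⟨U, hUnhds, hUprop⟩ := hcc (γ u)
    have hVn : interior U ∈ nhds (γ u) := interior_mem_nhds.mpr hUnhds
    have h1 : γ ⁻¹' interior U ∈ nhdsWithin u (Set.Icc a b) :=
      (hcont u hu) hVn
    obtain ⟨ε, hε, hball⟩ := Metric.mem_nhdsWithin_iff.mp h1
    exact ⟨ε, hε, U, hUprop, fun w hw hdw => hball ⟨Metric.mem_ball.mpr hdw, hw⟩⟩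
  choose ε hε U hUprop hUball using key
  -- Lebesgue number for the cover by balls B(u, ε u)
  obtain ⟨δ, hδ, hleb⟩ := lebesgue_number_lemma_of_metric (ι := Set.Icc a b)
    (c := fun u => Metric.ball (u : ℝ) (ε u)) isCompact_Icc
    (fun u => Metric.isOpen_ball)
    (fun x hx => Set.mem_iUnion.mpr ⟨⟨x, hx⟩, Metric.mem_ball_self (hε ⟨x, hx⟩)⟩)
  -- Step: nearby points are causally related
  have step : ∀ u v, u ∈ Set.Icc a b → v ∈ Set.Icc a b → u < v → v - u < δ →
      L.causal (γ u) (γ v) := by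
    intro u v hu hv huv hd
    obtain ⟨w, hw⟩ := hleb u hu
    have hud : u ∈ Metric.ball (w : ℝ) (ε w) := hw (Metric.mem_ball_self hδ)
    have hvd : v ∈ Metric.ball (w : ℝ) (ε w) := hw (by
      rw [Metric.mem_ball, Real.dist_eq, abs_sub_lt_iff]; constructor <;> linarith)
    have hγu : γ u ∈ interior (U w) := hUball w u hu (Metric.mem_ball.mp hud)
    have hγv : γ v ∈ interior (U w) := hUball w v hv (Metric.mem_ball.mp hvd)
    have hpu : ∀ᶠ n in Filter.atTop, γn n u ∈ U w :=
      ((hconv u hu).eventually_mem (isOpen_interior.mem_nhds hγu)).mono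
        (fun n h => interior_subset h)
    have hpv : ∀ᶠ n in Filter.atTop, γn n v ∈ U w :=
      ((hconv v hv).eventually_mem (isOpen_interior.mem_nhds hγv)).mono
        (fun n h => interior_subset h)
    obtain ⟨N, hN⟩ := Filter.eventually_atTop.mp (hpu.and hpv)
    refine hUprop w (fun n => γn (n + N) u) (fun n => γn (n + N) v) (γ u) (γ v)
      (fun n => (hN (n + N) (Nat.le_add_left N n)).1)
      (fun n => (hN (n + N) (Nat.le_add_left N n)).2)
      (fun n => (hn (n + N)).2.2.2 u v hu.1 huv hv.2)
      ((hconv u hu).comp (Filter.tendsto_add_atTop_nat N))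
      (subset_closure (interior_subset hγu))
      ((hconv v hv).comp (Filter.tendsto_add_atTop_nat N))
      (subset_closure (interior_subset hγv))
  -- Chain step through a partition
  have chain : ∀ k : ℕ, ∀ u v, u ∈ Set.Icc a b → v ∈ Set.Icc a b → u < v →
      v - u ≤ k * (δ / 2) → L.causal (γ u) (γ v) := by
    intro k
    induction k with
    | zero => intro u v _ _ huv hle; simp at hle; linarith
    | succ k ih =>
      intro u v hu hv huv hle
      by_cases h : v - u < δ
      · exact step u v hu hv huv h
      · have h1 : u < v - δ / 2 := by linarith
        have hw : v - δ / 2 ∈ Set.Icc a b := ⟨by linarith [hu.1], by linarith [hv.2]⟩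
        have h2 : v - δ / 2 - u ≤ k * (δ / 2) := by push_cast at hle ⊢; linarith
        exact L.causal_trans (ih u (v - δ / 2) hu hw h1 h2)
          (step (v - δ / 2) v hw hv (by linarith) (by linarith))
  intro s t hs hst htb
  obtain ⟨k, hk⟩ := exists_nat_ge ((t - s) / (δ / 2))
  have h2 : t - s ≤ k * (δ / 2) := by
    rw [div_le_iff₀ (by linarith)] at hk; linarith
  exact chain k s t ⟨hs, le_trans (le_of_lt hst) htb⟩ ⟨le_trans hs (le_of_lt hst), htb⟩ hst h2
end

section
/- In a Lorentzian pre-length space with τ continuous (as a map into [0,∞]) and τ(x,x) = 0 for all x, the arclength function φ(t) := L_τ(γ|_{[a,t]}) of a future-directed causal curve γ : [a,b] → X with L_τ(γ) < ∞ is monotonically increasing and continuous. -/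
open scoped ENNReal NNReal

variable {X : Type*} [MetricSpace X]

/-!
Write `φ t = L_τ(γ|_{[a,t]})`. Cutting a partition of `[a,c]` at `s ≤ c` and absorbing the
cut interval by the reverse triangle inequality shows that `φ` is monotone, while appending a
point to a partition of `[a,s]` gives `φ c ≤ φ s + τ(γ s, γ c)` for `s < c`. Hence
`φ t₀ - τ(γ t, γ t₀) ≤ φ t ≤ φ t₀ + τ(γ t₀, γ t)` on `[a,b]`, and both bounds tend to `φ t₀`
because `τ` is continuous and vanishes on the diagonal.
-/

open Set Filter Topology

lemma StrictMono.snoc {α : Type*} [Preorder α] {n : ℕ} {f : Fin (n + 1) → α} (hf : StrictMono f)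
    {x : α} (hx : f (Fin.last n) < x) : StrictMono (Fin.snoc f x : Fin (n + 2) → α) := by
  refine Fin.strictMono_iff_lt_succ.2 fun i => ?_
  induction i using Fin.lastCases with
  | last => rwa [Fin.succ_last, Fin.snoc_last, Fin.snoc_castSucc]
  | cast i =>
    rw [Fin.succ_castSucc, Fin.snoc_castSucc, Fin.snoc_castSucc]
    exact hf Fin.castSucc_lt_succ

namespace LorentzianPreLengthSpace

variable (L : LorentzianPreLengthSpace X)

lemma tau_le_tau_right {x y z : X} (hxy : L.causal x y) (hyz : L.causal y z) :
    L.tau x y ≤ L.tau x z :=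
  le_self_add.trans (L.rev_triangle hxy hyz)

end LorentzianPreLengthSpace

noncomputable def tauSum (L : LorentzianPreLengthSpace X) (γ : ℝ → X) {N : ℕ}
    (t : Fin (N + 1) → ℝ) : ℝ≥0∞ :=
  ∑ i : Fin N, L.tau (γ (t i.castSucc)) (γ (t i.succ))

section

variable {L : LorentzianPreLengthSpace X} {γ : ℝ → X} {a b c s : ℝ}

lemma tauSum_snoc {N : ℕ} (t : Fin (N + 1) → ℝ) (x : ℝ) :
    tauSum L γ (Fin.snoc t x : Fin (N + 2) → ℝ) =
      tauSum L γ t + L.tau (γ (t (Fin.last N))) (γ x) := by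
  simp only [tauSum, Fin.sum_univ_castSucc, Fin.succ_castSucc, Fin.snoc_castSucc, Fin.succ_last,
    Fin.snoc_last]

lemma tauLength_le_tauSum {N : ℕ} {t : Fin (N + 1) → ℝ} (ht : StrictMono t) (h0 : t 0 = a)
    (hN : t (Fin.last N) = c) : tauLength L γ a c ≤ tauSum L γ t :=
  iInf_le_of_le N <| iInf_le_of_le t <| iInf_le_of_le ht <| iInf_le_of_le h0 <| iInf_le _ hN

lemma tauLength_self : tauLength L γ a a = 0 := by
  have hconst : StrictMono (fun _ : Fin 1 => a) := Fin.strictMono_iff_lt_succ.2 fun i => i.elim0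
  simpa [tauSum] using tauLength_le_tauSum (L := L) (γ := γ) hconst rfl rfl

lemma tauLength_le_add_tau (hsc : s < c) :
    tauLength L γ a c ≤ tauLength L γ a s + L.tau (γ s) (γ c) := by
  conv_rhs => rw [tauLength]
  simp only [ENNReal.iInf_add]
  refine le_iInf fun N => le_iInf fun t => le_iInf fun ht => le_iInf fun h0 => le_iInf fun hN => ?_
  subst hN
  exact (tauLength_le_tauSum (ht.snoc hsc) (by simpa using h0) (Fin.snoc_last _ _)).trans_eq
    (tauSum_snoc t c)

section CausalCurve

variable (hcaus : ∀ s t, a ≤ s → s < t → t ≤ b → L.causal (γ s) (γ t))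
include hcaus

lemma causal_of_le (has : a ≤ s) (hsc : s ≤ c) (hcb : c ≤ b) : L.causal (γ s) (γ c) := by
  rcases hsc.eq_or_lt with rfl | hsc
  · exact L.causal_refl _
  · exact hcaus s c has hsc hcb

lemma tauLength_le_tauSum_of_le {N : ℕ} {t : Fin (N + 1) → ℝ} (ht : StrictMono t) (h0 : t 0 = a)
    (hb : t (Fin.last N) ≤ b) (has : a ≤ s) (hs : s ≤ t (Fin.last N)) :
    tauLength L γ a s ≤ tauSum L γ t := by
  induction N generalizing s with
  | zero =>
    obtain rfl : s = a := le_antisymm (h0 ▸ hs) has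
    simp [tauLength_self]
  | succ N ih =>
    rw [← Fin.snoc_init_self t, tauSum_snoc]
    set c' := Fin.init t (Fin.last N)
    have hinit : StrictMono (Fin.init t) := ht.comp Fin.strictMono_castSucc
    have hac' : a ≤ c' := h0 ▸ hinit.monotone (Fin.zero_le _)
    have hc'c : c' < t (Fin.last (N + 1)) := ht (Fin.castSucc_lt_last _)
    rcases le_or_gt s c' with hsc' | hc's
    · exact (ih hinit h0 (hc'c.le.trans hb) has hsc').trans le_self_add
    · calc tauLength L γ a s ≤ tauLength L γ a c' + L.tau (γ c') (γ s) :=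
            tauLength_le_add_tau hc's
        _ ≤ tauSum L γ (Fin.init t) + L.tau (γ c') (γ (t (Fin.last (N + 1)))) := by
            gcongr
            · exact tauLength_le_tauSum hinit h0 rfl
            · exact L.tau_le_tau_right (causal_of_le hcaus hac' hc's.le (hs.trans hb))
                (causal_of_le hcaus (hac'.trans hc's.le) hs hb)

lemma monotoneOn_tauLength : MonotoneOn (tauLength L γ a) (Icc a b) := fun _ hs _ hc hsc =>
  le_iInf fun _ => le_iInf fun _ => le_iInf fun ht => le_iInf fun h0 => le_iInf fun hN =>
    tauLength_le_tauSum_of_le hcaus ht h0 (hN ▸ hc.2) hs.1 (hN ▸ hsc)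

lemma tauLength_le_tauLength_add_tau (hs : s ∈ Icc a b) (hc : c ∈ Icc a b) :
    tauLength L γ a c ≤ tauLength L γ a s + L.tau (γ s) (γ c) := by
  rcases le_or_gt c s with hcs | hsc
  · exact (monotoneOn_tauLength hcaus hc hs hcs).trans le_self_add
  · exact tauLength_le_add_tau hsc

lemma continuousOn_tauLength (htau : Continuous fun p : X × X => L.tau p.1 p.2)
    (hdiag : ∀ x, L.tau x x = 0) (hγ : ContinuousOn γ (Icc a b)) :
    ContinuousOn (tauLength L γ a) (Icc a b) := by
  intro t₀ ht₀
  have hleft : Tendsto (fun t => L.tau (γ t) (γ t₀)) (𝓝[Icc a b] t₀) (𝓝 0) := by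
    rw [← hdiag (γ t₀)]
    exact (htau.tendsto (γ t₀, γ t₀)).comp ((hγ t₀ ht₀).tendsto.prodMk_nhds tendsto_const_nhds)
  have hright : Tendsto (fun t => L.tau (γ t₀) (γ t)) (𝓝[Icc a b] t₀) (𝓝 0) := by
    rw [← hdiag (γ t₀)]
    exact (htau.tendsto (γ t₀, γ t₀)).comp (tendsto_const_nhds.prodMk_nhds (hγ t₀ ht₀).tendsto)
  have hlower : Tendsto (fun t => tauLength L γ a t₀ - L.tau (γ t) (γ t₀)) (𝓝[Icc a b] t₀)
      (𝓝 (tauLength L γ a t₀)) := by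
    simpa using ENNReal.Tendsto.sub tendsto_const_nhds hleft (Or.inr ENNReal.zero_ne_top)
  have hupper : Tendsto (fun t => tauLength L γ a t₀ + L.tau (γ t₀) (γ t)) (𝓝[Icc a b] t₀)
      (𝓝 (tauLength L γ a t₀)) := by
    simpa using tendsto_const_nhds.add hright
  refine tendsto_of_tendsto_of_tendsto_of_le_of_le' hlower hupper ?_ ?_
  · filter_upwards [self_mem_nhdsWithin] with t ht
    exact tsub_le_iff_right.2 (tauLength_le_tauLength_add_tau hcaus ht ht₀)
  · filter_upwards [self_mem_nhdsWithin] with t ht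
    exact tauLength_le_tauLength_add_tau hcaus ht₀ ht

end CausalCurve

end

theorem arclength_monotone_continuous_general (L : LorentzianPreLengthSpace X)
    (htau_cont : Continuous fun p : X × X => L.tau p.1 p.2)
    (hdiag : ∀ x, L.tau x x = 0)
    {γ : ℝ → X} {a b : ℝ}
    (hγ : IsCausalCurve L γ a b) :
    MonotoneOn (fun t => tauLength L γ a t) (Set.Icc a b) ∧
    ContinuousOn (fun t => tauLength L γ a t) (Set.Icc a b) := by
  obtain ⟨-, -, ⟨K, hK⟩, hcaus⟩ := hγ
  exact ⟨monotoneOn_tauLength hcaus, continuousOn_tauLength hcaus htau_cont hdiag hK.continuousOn⟩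

/-- If τ is continuous and vanishes on the diagonal, the arclength function
`t ↦ L_τ(γ|_{[a,t]})` of a causal curve of finite τ-length is monotone and continuous. -/
theorem arclength_monotone_continuous (L : LorentzianPreLengthSpace X)
    (htau_cont : Continuous fun p : X × X => L.tau p.1 p.2)
    (hdiag : ∀ x, L.tau x x = 0)
    {γ : ℝ → X} {a b : ℝ}
    (hγ : IsCausalCurve L γ a b)
    (hfin : tauLength L γ a b < ⊤) :
    MonotoneOn (fun t => tauLength L γ a t) (Set.Icc a b) ∧
    ContinuousOn (fun t => tauLength L γ a t) (Set.Icc a b) :=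
  arclength_monotone_continuous_general L htau_cont hdiag hγ
end
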